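/- Let g: ℝ⁶ → [0,∞) be integrable with g ≤ M and supp g ⊂ B_R × B_R ⊂ ℝ³ × ℝ³, let X₁, X₂: ℝ⁶ → ℝ³ be measurable with d := sup_{z ∈ supp g} |X₁(z) − X₂(z)| < ∞, and suppose each map z ↦ (Xᵢ(z), Vᵢ(z)) is a measure-preserving injection whose image of supp g lies in B_R × B_R. Then for every r > 0, λ({z ∈ supp g : |X₁(z)| ≤ r < |X₂(z)| or |X₂(z)| ≤ r < |X₁(z)|}) ≤ 2 λ(B_R) · (4π/3)(r³ − (r−d)₊³). -/
import Mathlib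


open MeasureTheory Set Metric Real

local notation "E3" => EuclideanSpace ℝ (Fin 3)

private lemma e3_volume_ball (a : ℝ) : volume (ball (0 : EuclideanSpace ℝ (Fin 3)) a) =
    ENNReal.ofReal a ^ 3 * ENNReal.ofReal (4 * π / 3) := by
  rw [EuclideanSpace.volume_ball]
  simp only [Fintype.card_fin]
  congr 1
  congr 1
  rw [show ((3:ℕ):ℝ) / 2 + 1 = 3/2 + 1 by norm_num,
    Real.Gamma_add_one (by norm_num), show (3:ℝ)/2 = 1/2 + 1 by norm_num,
    Real.Gamma_add_one (by norm_num), Real.Gamma_one_half_eq]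
  rw [show Real.sqrt π ^ 3 = π * Real.sqrt π by
    rw [pow_succ, sq_sqrt pi_pos.le]]
  have : Real.sqrt π ≠ 0 := by positivity
  field_simp
  ring

/-- The symmetric-difference volume estimate. If `g ≥ 0` is
integrable, bounded by `M`, supported in `B_R × B_R`, and `z ↦ (Xᵢ z, Vᵢ z)`
(`i = 1,2`) are measure-preserving injections mapping `supp g` into
`B_R × B_R` with `|X₁ − X₂| ≤ d` on `supp g`, then for every `r > 0`,
`λ({z ∈ supp g : |X₁ z| ≤ r < |X₂ z| ∨ |X₂ z| ≤ r < |X₁ z|})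
  ≤ 2 λ(B_R) (4π/3)(r³ − (r−d)₊³)`. -/
theorem symmetric_difference_volume_estimate
    (g : E3 × E3 → ℝ) (hgi : Integrable g) (hgpos : ∀ z, 0 ≤ g z)
    (M : ℝ) (hgM : ∀ z, g z ≤ M)
    (R : ℝ) (hR : 0 < R)
    (hsupp : Function.support g ⊆ ball (0 : E3) R ×ˢ ball (0 : E3) R)
    (X₁ X₂ V₁ V₂ : E3 × E3 → E3)
    (hm₁ : MeasurePreserving (fun z => (X₁ z, V₁ z)) volume volume)
    (hm₂ : MeasurePreserving (fun z => (X₂ z, V₂ z)) volume volume)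
    (hi₁ : Function.Injective (fun z => (X₁ z, V₁ z)))
    (hi₂ : Function.Injective (fun z => (X₂ z, V₂ z)))
    (him₁ : ∀ z ∈ Function.support g, (X₁ z, V₁ z) ∈ ball (0 : E3) R ×ˢ ball (0 : E3) R)
    (him₂ : ∀ z ∈ Function.support g, (X₂ z, V₂ z) ∈ ball (0 : E3) R ×ˢ ball (0 : E3) R)
    (d : ℝ) (hd : 0 ≤ d)
    (hdist : ∀ z ∈ Function.support g, ‖X₁ z - X₂ z‖ ≤ d) :
    ∀ r > (0 : ℝ),
      volume {z ∈ Function.support g |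
          (‖X₁ z‖ ≤ r ∧ r < ‖X₂ z‖) ∨ (‖X₂ z‖ ≤ r ∧ r < ‖X₁ z‖)} ≤
        2 * volume (ball (0 : E3) R) *
          ENNReal.ofReal ((4 * π / 3) * (r ^ 3 - (max (r - d) 0) ^ 3)) := by
  intro r hr
  set s : ℝ := max (r - d) 0 with hs
  have hs0 : 0 ≤ s := le_max_right _ _
  have hsr : s ≤ r := max_le (by linarith) hr.le
  -- the annulus
  set S : Set E3 := closedBall 0 r \ ball 0 s with hS
  set T : Set (E3 × E3) := S ×ˢ ball (0 : E3) R with hT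
  have hTm : MeasurableSet T :=
    (measurableSet_closedBall.diff measurableSet_ball).prod measurableSet_ball
  -- the two halves
  have key : ∀ (X Y VX VY : E3 × E3 → E3),
      MeasurePreserving (fun z => (X z, VX z)) volume volume →
      (∀ z ∈ Function.support g, (X z, VX z) ∈ ball (0 : E3) R ×ˢ ball (0 : E3) R) →
      (∀ z ∈ Function.support g, ‖X z - Y z‖ ≤ d) →
      volume {z ∈ Function.support g | ‖X z‖ ≤ r ∧ r < ‖Y z‖} ≤ volume T := by
    intro X Y VX VY hmp him hdi
    have hsub : {z ∈ Function.support g | ‖X z‖ ≤ r ∧ r < ‖Y z‖} ⊆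
        (fun z => (X z, VX z)) ⁻¹' T := by
      rintro z ⟨hz, h1, h2⟩
      refine ⟨⟨?_, ?_⟩, (him z hz).2⟩
      · simpa [mem_closedBall_zero_iff] using h1
      · simp only [mem_ball_zero_iff, not_lt]
        have h3 : ‖Y z‖ - ‖X z‖ ≤ ‖X z - Y z‖ := by
          have := norm_sub_norm_le (Y z) (X z)
          rwa [← norm_neg (Y z - X z), neg_sub] at this
        have h4 := hdi z hz
        exact max_le (by linarith) (norm_nonneg _)
    calc volume {z ∈ Function.support g | ‖X z‖ ≤ r ∧ r < ‖Y z‖}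
        ≤ volume ((fun z => (X z, VX z)) ⁻¹' T) := measure_mono hsub
      _ = volume T := hmp.measure_preimage hTm.nullMeasurableSet
  have hsplit : {z ∈ Function.support g |
          (‖X₁ z‖ ≤ r ∧ r < ‖X₂ z‖) ∨ (‖X₂ z‖ ≤ r ∧ r < ‖X₁ z‖)} ⊆
      {z ∈ Function.support g | ‖X₁ z‖ ≤ r ∧ r < ‖X₂ z‖} ∪
      {z ∈ Function.support g | ‖X₂ z‖ ≤ r ∧ r < ‖X₁ z‖} := by
    rintro z ⟨hz, h | h⟩
    · exact Or.inl ⟨hz, h⟩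
    · exact Or.inr ⟨hz, h⟩
  have hdist' : ∀ z ∈ Function.support g, ‖X₂ z - X₁ z‖ ≤ d := by
    intro z hz
    rw [← norm_neg, neg_sub]; exact hdist z hz
  have hbound : volume {z ∈ Function.support g |
          (‖X₁ z‖ ≤ r ∧ r < ‖X₂ z‖) ∨ (‖X₂ z‖ ≤ r ∧ r < ‖X₁ z‖)} ≤ 2 * volume T := by
    calc volume {z ∈ Function.support g |
          (‖X₁ z‖ ≤ r ∧ r < ‖X₂ z‖) ∨ (‖X₂ z‖ ≤ r ∧ r < ‖X₁ z‖)}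
        ≤ volume ({z ∈ Function.support g | ‖X₁ z‖ ≤ r ∧ r < ‖X₂ z‖} ∪
            {z ∈ Function.support g | ‖X₂ z‖ ≤ r ∧ r < ‖X₁ z‖}) := measure_mono hsplit
      _ ≤ volume {z ∈ Function.support g | ‖X₁ z‖ ≤ r ∧ r < ‖X₂ z‖} +
            volume {z ∈ Function.support g | ‖X₂ z‖ ≤ r ∧ r < ‖X₁ z‖} := measure_union_le _ _
      _ ≤ volume T + volume T := add_le_add
            (key X₁ X₂ V₁ V₂ hm₁ him₁ hdist) (key X₂ X₁ V₂ V₁ hm₂ him₂ hdist')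
      _ = 2 * volume T := (two_mul _).symm
  refine hbound.trans ?_
  -- compute volume of T
  have hST : volume T = volume S * volume (ball (0 : E3) R) := by
    rw [hT, Measure.volume_eq_prod, Measure.prod_prod]
  have hSvol : volume S = ENNReal.ofReal ((4 * π / 3) * (r ^ 3 - s ^ 3)) := by
    rw [hS, measure_diff (ball_subset_closedBall.trans (closedBall_subset_closedBall hsr))
      measurableSet_ball.nullMeasurableSet measure_ball_lt_top.ne]
    rw [Measure.addHaar_closedBall_eq_addHaar_ball, e3_volume_ball, e3_volume_ball,
      ← ENNReal.ofReal_pow hr.le, ← ENNReal.ofReal_pow hs0,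
      ← ENNReal.ofReal_mul (by positivity), ← ENNReal.ofReal_mul (by positivity),
      ← ENNReal.ofReal_sub _ (by positivity)]
    congr 1
    have : s ^ 3 ≤ r ^ 3 := pow_le_pow_left₀ hs0 hsr 3
    ring
  rw [hST, hSvol]
  ring_nf
  exact le_rfl
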